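/- Let A be a real matrix indexed by (Fin m × Fin m) rows and (Fin n × Fin n) columns such that the block vec matrix vec^{(m×n)}(A) is symmetric and has rank 1. Then there exists a real m×n matrix B with A = B ⊗ B if and only if the trace of vec^{(m×n)}(A) is strictly positive. -/

import Mathlib

/-!
Up to the reindexing `blockVec`, the Kronecker square `B ⊗ₖ B` is the rank-one matrix
`b bᵀ`, where `b` is `B` flattened to a vector on `Fin m × Fin n`. A symmetric real matrix of
rank one is `t • v vᵀ` with `v ≠ 0` and `t ≠ 0`; its trace is `t ‖v‖²`, so it is of the form
`b bᵀ` (take `b = √t • v`) exactly when the trace is positive.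
-/

open Matrix Kronecker

/-- The block vec matrix of an `mp × nq` matrix `A`, viewed as an `m × n` block matrix
with `p × q` blocks: its entry in row `(i, j)` and column `(k, l)` is `A (i, k) (j, l)`. -/
def blockVec {𝕜 : Type*} {m n p q : ℕ} (A : Matrix (Fin m × Fin p) (Fin n × Fin q) 𝕜) :
    Matrix (Fin m × Fin n) (Fin p × Fin q) 𝕜 :=
  Matrix.of fun r c => A (r.1, c.1) (r.2, c.2)

section blockVec

variable {𝕜 : Type*} {m n p q : ℕ}

theorem blockVec_injective :
    Function.Injective (blockVec : Matrix (Fin m × Fin p) (Fin n × Fin q) 𝕜 → _) :=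
  fun _ _ h => ext fun r c => congrFun₂ h (r.1, c.1) (r.2, c.2)

theorem blockVec_kronecker [Mul 𝕜] (B : Matrix (Fin m) (Fin n) 𝕜) (C : Matrix (Fin p) (Fin q) 𝕜) :
    blockVec (B ⊗ₖ C) = vecMulVec (Function.uncurry B) (Function.uncurry C) :=
  rfl

end blockVec

namespace Matrix

theorem trace_vecMulVec_self_pos {R ι : Type*} [Fintype ι] [Ring R] [LinearOrder R]
    [IsStrictOrderedRing R] {v : ι → R} (hv : v ≠ 0) : 0 < (vecMulVec v v).trace := by
  rw [trace_vecMulVec]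
  exact lt_of_le_of_ne (Fintype.sum_nonneg fun i => mul_self_nonneg (v i))
    (Ne.symm (dotProduct_self_eq_zero.not.mpr hv))

variable {K m n : Type*} [Field K]

theorem exists_eq_vecMulVec_of_rank_eq_one [Fintype n] [DecidableEq n]
    {M : Matrix m n K} (h : M.rank = 1) : ∃ u w, u ≠ 0 ∧ M = vecMulVec u w := by
  rw [rank] at h
  obtain ⟨⟨u, _⟩, hu, hspan⟩ := finrank_eq_one_iff'.mp h
  have hcol : ∀ j, ∃ c : K, c • u = M.col j := fun j => by
    obtain ⟨c, hc⟩ := hspan ⟨M *ᵥ Pi.single j 1, LinearMap.mem_range_self _ _⟩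
    exact ⟨c, by simpa [mulVec_single_one] using congrArg Subtype.val hc⟩
  choose c hc using hcol
  refine ⟨u, c, fun h0 => hu (Subtype.ext h0), ext fun i j => ?_⟩
  simpa [vecMulVec_apply, mul_comm] using (congrFun (hc j) i).symm

theorem IsSymm.exists_eq_smul_vecMulVec_self_of_rank_eq_one [Fintype m] [DecidableEq m]
    {M : Matrix m m K} (hM : M.IsSymm) (h : M.rank = 1) :
    ∃ (t : K) (u : m → K), u ≠ 0 ∧ M = t • vecMulVec u u := by
  obtain ⟨u, w, hu, rfl⟩ := exists_eq_vecMulVec_of_rank_eq_one h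
  obtain ⟨p, hp : u p ≠ 0⟩ := Function.ne_iff.mp hu
  -- comparing row `p` with column `p` shows that `w` is proportional to `u`
  have hw : w = (w p / u p) • u := funext fun j => by
    have := hM.apply p j
    simp only [vecMulVec_apply] at this
    rw [Pi.smul_apply, smul_eq_mul]
    field_simp
    linear_combination this.symm
  exact ⟨w p / u p, u, hu, by rw [← vecMulVec_smul, ← hw]⟩

theorem IsSymm.exists_eq_vecMulVec_self_of_rank_eq_one_of_trace_pos [Fintype m]
    [DecidableEq m] {M : Matrix m m ℝ} (hM : M.IsSymm) (hrank : M.rank = 1)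
    (htr : 0 < M.trace) : ∃ v, M = vecMulVec v v := by
  obtain ⟨t, u, hu, rfl⟩ := hM.exists_eq_smul_vecMulVec_self_of_rank_eq_one hrank
  have ht : 0 < t := by
    rw [trace_smul, smul_eq_mul] at htr
    exact pos_of_mul_pos_left htr (trace_vecMulVec_self_pos hu).le
  refine ⟨√t • u, ?_⟩
  rw [smul_vecMulVec, vecMulVec_smul, smul_smul, Real.mul_self_sqrt ht.le]

end Matrix

theorem exists_real_kronecker_sqrt_iff_trace_pos {m n : ℕ}
    (A : Matrix (Fin m × Fin m) (Fin n × Fin n) ℝ)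
    (hsymm : (blockVec A).IsSymm) (hrank : (blockVec A).rank = 1) :
    (∃ B : Matrix (Fin m) (Fin n) ℝ, A = B ⊗ₖ B) ↔ 0 < (blockVec A).trace := by
  constructor
  · rintro ⟨B, rfl⟩
    rw [blockVec_kronecker] at hrank ⊢
    refine trace_vecMulVec_self_pos fun hB => ?_
    simp [hB, rank_zero] at hrank
  · intro htr
    obtain ⟨v, hv⟩ := hsymm.exists_eq_vecMulVec_self_of_rank_eq_one_of_trace_pos hrank htr
    refine ⟨of (Function.curry v), blockVec_injective ?_⟩
    rw [hv, blockVec_kronecker]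
    rfl
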